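/- arXiv:1408.1428 — 2 statements merged into one kernel-verified Lean document; each statement's English description precedes it below -/
import Mathlib

section
/- Let f : [a,b] → ℝ and let p ≥ 1. For any tagged partition Π(ξ) of [a,b] (with tags ξ_i ∈ [x_{i-1}, x_i]), the step function f_{Π(ξ)} (defined by f_{Π(ξ)}(x_i) = f(x_i) at partition points and f_{Π(ξ)}(x) = f(ξ_i) for x ∈ (x_{i-1}, x_i)) satisfies ‖f_{Π(ξ)}‖_{[a,b],p} ≤ ‖f‖_{[a,b],p}, where ‖h‖_{[a,b],p}^p = sup over all partitions of [a,b] of the sum of |h(x_i) - h(x_{i-1})|^p. -/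
open Set
open scoped ENNReal

noncomputable section

/-- Rectangular increment of a two-variable function. -/
def rect (H : ℝ → ℝ → ℝ) (x x' y y' : ℝ) : ℝ :=
  H x' y' - H x y' - H x' y + H x y

/-- The `p`-variation (the `p`-th power of the seminorm) of `f` on `[a,b]`,
as an extended nonnegative real. -/
def pVarE (p a b : ℝ) (f : ℝ → ℝ) : ℝ≥0∞ :=
  ⨆ (n : ℕ) (t : Fin (n + 1) → ℝ) (_ : Monotone t) (_ : t 0 = a)
    (_ : t (Fin.last n) = b),
    ∑ i : Fin n, ENNReal.ofReal |f (t i.succ) - f (t i.castSucc)| ^ p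

/-- The `p`-variation seminorm `‖f‖_{[a,b],p}`. -/
def pVarNormE (p a b : ℝ) (f : ℝ → ℝ) : ℝ≥0∞ := pVarE p a b f ^ (1 / p)

/-- The first bivariation seminorm `‖F‖_{1;p}`. -/
def biVar1E (p a b c d : ℝ) (F : ℝ → ℝ → ℝ) : ℝ≥0∞ :=
  ⨆ (y₁ ∈ Icc c d) (y₂ ∈ Icc c d), pVarNormE p a b (fun x => F x y₁ - F x y₂)

/-- The second bivariation seminorm `‖F‖_{2;q}`. -/
def biVar2E (q a b c d : ℝ) (F : ℝ → ℝ → ℝ) : ℝ≥0∞ :=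
  ⨆ (x₁ ∈ Icc a b) (x₂ ∈ Icc a b), pVarNormE q c d (fun y => F x₁ y - F x₂ y)

/-- The joint `p`-variation `V_p(F)` of a two-variable function. -/
def jointVarE (p a b c d : ℝ) (F : ℝ → ℝ → ℝ) : ℝ≥0∞ :=
  (⨆ (n : ℕ) (m : ℕ) (t : Fin (n + 1) → ℝ) (s : Fin (m + 1) → ℝ)
      (_ : Monotone t) (_ : t 0 = a) (_ : t (Fin.last n) = b)
      (_ : Monotone s) (_ : s 0 = c) (_ : s (Fin.last m) = d),
      ∑ i : Fin n, ∑ j : Fin m,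
        ENNReal.ofReal
          |rect F (t i.castSucc) (t i.succ) (s j.castSucc) (s j.succ)| ^ p) ^ (1 / p)

/-!
On each open cell `(x_{i-1}, x_i)` the step function is `f` evaluated at the tag `ξ_i`, and at the
partition points it is `f` itself. Hence `f_{Π(ξ)} = f ∘ g` on `[a,b]`, where `g` collapses each open
cell to its tag and fixes everything else. This `g` is monotone and fixes `a` and `b`, so it carries
every partition of `[a,b]` to a partition of `[a,b]` with the same increments of `f ∘ g` as increments
of `f`: the `p`-variation can only decrease under such a reparametrization.
-/

section PVar

variable {p a b : ℝ}

theorem pVarE_congr_of_eqOn {f₁ f₂ : ℝ → ℝ} (h : EqOn f₁ f₂ (Icc a b)) :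
    pVarE p a b f₁ = pVarE p a b f₂ := by
  unfold pVarE
  refine iSup_congr fun n => iSup_congr fun t => iSup_congr fun ht => iSup_congr fun ht0 =>
    iSup_congr fun htN => Finset.sum_congr rfl fun i _ => ?_
  have hmem : ∀ k, t k ∈ Icc a b := fun k =>
    ⟨ht0 ▸ ht (Fin.zero_le k), htN ▸ ht (Fin.le_last k)⟩
  rw [h (hmem i.succ), h (hmem i.castSucc)]

theorem pVarE_comp_le {f g : ℝ → ℝ} (hg : MonotoneOn g (Icc a b)) (ha : g a = a) (hb : g b = b) :
    pVarE p a b (f ∘ g) ≤ pVarE p a b f := by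
  refine iSup_le fun n => iSup_le fun t => iSup_le fun ht => iSup_le fun ht0 =>
    iSup_le fun htN => ?_
  have hmem : ∀ k, t k ∈ Icc a b := fun k =>
    ⟨ht0 ▸ ht (Fin.zero_le k), htN ▸ ht (Fin.le_last k)⟩
  have hgt : Monotone (g ∘ t) := fun i j hij => hg (hmem i) (hmem j) (ht hij)
  exact le_iSup_of_le n <| le_iSup_of_le (g ∘ t) <| le_iSup_of_le hgt <|
    le_iSup_of_le (by simp [ht0, ha]) <| le_iSup_of_le (by simp [htN, hb]) le_rfl

end PVar

section TaggedPartition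

variable {N : ℕ} {x : Fin (N + 1) → ℝ} {ξ : Fin N → ℝ}

abbrev cell (x : Fin (N + 1) → ℝ) (j : Fin N) : Set ℝ := Ioo (x j.castSucc) (x j.succ)

theorem Monotone.eq_of_mem_cell (hx : Monotone x) {z : ℝ} {j j' : Fin N}
    (hj : z ∈ cell x j) (hj' : z ∈ cell x j') : j = j' := by
  by_contra hne
  rcases lt_or_gt_of_ne hne with h | h
  · linarith [hx (Fin.succ_le_castSucc_iff.2 h), hj.2, hj'.1]
  · linarith [hx (Fin.succ_le_castSucc_iff.2 h), hj.1, hj'.2]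

theorem Monotone.notMem_cell (hx : Monotone x) (i : Fin (N + 1)) (j : Fin N) :
    x i ∉ cell x j := by
  rintro ⟨h₁, h₂⟩
  have := hx.reflect_lt h₁
  have := hx.reflect_lt h₂
  rw [Fin.lt_def] at *
  simp only [Fin.val_castSucc, Fin.val_succ] at *
  omega

theorem Monotone.exists_eq_or_mem_cell (hx : Monotone x) {z : ℝ}
    (hz : z ∈ Icc (x 0) (x (Fin.last N))) : (∃ i, z = x i) ∨ ∃ j, z ∈ cell x j := by
  induction N with
  | zero => exact .inl ⟨0, le_antisymm hz.2 hz.1⟩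
  | succ N ih =>
    rcases le_or_gt z (x (Fin.last N).castSucc) with hle | hlt
    · rcases ih (hx.comp Fin.strictMono_castSucc.monotone) ⟨hz.1, hle⟩ with
        ⟨i, hi⟩ | ⟨j, hj⟩
      · exact .inl ⟨i.castSucc, hi⟩
      · refine .inr ⟨j.castSucc, ?_⟩
        rwa [cell, Fin.succ_castSucc]
    · rcases eq_or_lt_of_le hz.2 with heq | hlt'
      · exact .inl ⟨Fin.last (N + 1), heq⟩
      · exact .inr ⟨Fin.last N, hlt, by simpa using hlt'⟩

open Classical in
def tagRetraction (x : Fin (N + 1) → ℝ) (ξ : Fin N → ℝ) (z : ℝ) : ℝ :=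
  if h : ∃ j, z ∈ cell x j then ξ h.choose else z

theorem tagRetraction_of_mem_cell (hx : Monotone x) {z : ℝ} {j : Fin N} (hz : z ∈ cell x j) :
    tagRetraction x ξ z = ξ j := by
  have hex : ∃ j, z ∈ cell x j := ⟨j, hz⟩
  rw [tagRetraction, dif_pos hex, hx.eq_of_mem_cell hex.choose_spec hz]

theorem tagRetraction_of_forall_notMem_cell {z : ℝ} (hz : ∀ j, z ∉ cell x j) :
    tagRetraction x ξ z = z := by
  rw [tagRetraction, dif_neg (not_exists.2 hz)]

theorem tagRetraction_apply (hx : Monotone x) (i : Fin (N + 1)) :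
    tagRetraction x ξ (x i) = x i :=
  tagRetraction_of_forall_notMem_cell (hx.notMem_cell i)

theorem tagRetraction_monotone (hx : Monotone x)
    (hξ : ∀ j : Fin N, x j.castSucc ≤ ξ j ∧ ξ j ≤ x j.succ) :
    Monotone (tagRetraction x ξ) := by
  intro z z' hzz'
  by_cases h : ∃ j, z ∈ cell x j
  · obtain ⟨j, hj⟩ := h
    rw [tagRetraction_of_mem_cell hx hj]
    by_cases h' : ∃ j', z' ∈ cell x j'
    · obtain ⟨j', hj'⟩ := h'
      rw [tagRetraction_of_mem_cell hx hj']
      rcases lt_trichotomy j j' with hlt | rfl | hgt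
      · linarith [hx (Fin.succ_le_castSucc_iff.2 hlt), (hξ j).2, (hξ j').1]
      · exact le_rfl
      · linarith [hx (Fin.succ_le_castSucc_iff.2 hgt), hj.1, hj'.2]
    · rw [tagRetraction_of_forall_notMem_cell (not_exists.1 h')]
      have : x j.succ ≤ z' := not_lt.1 fun hlt => h' ⟨j, hj.1.trans_le hzz', hlt⟩
      linarith [(hξ j).2]
  · rw [tagRetraction_of_forall_notMem_cell (not_exists.1 h)]
    by_cases h' : ∃ j', z' ∈ cell x j'
    · obtain ⟨j', hj'⟩ := h'
      rw [tagRetraction_of_mem_cell hx hj']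
      have : z ≤ x j'.castSucc := not_lt.1 fun hlt => h ⟨j', hlt, hzz'.trans_lt hj'.2⟩
      linarith [(hξ j').1]
    · rwa [tagRetraction_of_forall_notMem_cell (not_exists.1 h')]

end TaggedPartition

theorem step_function_pvar_le_general
    (a b p : ℝ) (hp : 1 ≤ p)
    (f fP : ℝ → ℝ) (N : ℕ) (x : Fin (N + 1) → ℝ) (ξ : Fin N → ℝ)
    (hx : StrictMono x) (hx0 : x 0 = a) (hxN : x (Fin.last N) = b)
    (hξ : ∀ i : Fin N, x i.castSucc ≤ ξ i ∧ ξ i ≤ x i.succ)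
    (hstep₁ : ∀ i : Fin (N + 1), fP (x i) = f (x i))
    (hstep₂ : ∀ i : Fin N, ∀ z : ℝ, x i.castSucc < z → z < x i.succ → fP z = f (ξ i)) :
    pVarNormE p a b fP ≤ pVarNormE p a b f := by
  subst hx0 hxN
  have hfP : EqOn fP (f ∘ tagRetraction x ξ) (Icc (x 0) (x (Fin.last N))) := by
    intro z hz
    rcases hx.monotone.exists_eq_or_mem_cell hz with ⟨i, rfl⟩ | ⟨j, hj⟩
    · rw [Function.comp_apply, tagRetraction_apply hx.monotone, hstep₁]
    · rw [Function.comp_apply, tagRetraction_of_mem_cell hx.monotone hj, hstep₂ j z hj.1 hj.2]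
  refine ENNReal.rpow_le_rpow ?_ (by positivity)
  rw [pVarE_congr_of_eqOn hfP]
  exact pVarE_comp_le ((tagRetraction_monotone hx.monotone hξ).monotoneOn _)
    (tagRetraction_apply hx.monotone 0) (tagRetraction_apply hx.monotone _)

/-- the step function of `f` based on a tagged partition has
`p`-variation seminorm at most that of `f`. -/
theorem step_function_pvar_le
    (a b p : ℝ) (hab : a < b) (hp : 1 ≤ p)
    (f fP : ℝ → ℝ) (N : ℕ) (x : Fin (N + 1) → ℝ) (ξ : Fin N → ℝ)
    (hx : StrictMono x) (hx0 : x 0 = a) (hxN : x (Fin.last N) = b)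
    (hξ : ∀ i : Fin N, x i.castSucc ≤ ξ i ∧ ξ i ≤ x i.succ)
    (hstep₁ : ∀ i : Fin (N + 1), fP (x i) = f (x i))
    (hstep₂ : ∀ i : Fin N, ∀ z : ℝ, x i.castSucc < z → z < x i.succ → fP z = f (ξ i)) :
    pVarNormE p a b fP ≤ pVarNormE p a b f :=
  step_function_pvar_le_general a b p hp f fP N x ξ hx hx0 hxN hξ hstep₁ hstep₂
end
end

section
/- Let Π(ξ) = {x_0 = a < ... < x_N = b} be a finite set of points in [a,b]. Then there exists M ∈ ℕ and a sequence of partitions Π_0 ⊆ Π_1 ⊆ ... ⊆ Π_M of [a,b] with Π_0 = {a,b}, #Π_j = 2^j + 1, consecutive points of Π_j at distance less than 4·2^{-j}·(b−a) (after rescaling [a,b] to unit length: distance < 4·2^{-j} when b − a ≤ 1), each Π_{j+1} obtained from Π_j by inserting exactly one point in each subinterval of Π_j, and such that Π_M refines {x_0, ..., x_N}. -/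
/-!
Choose `M` so large that the grid step `h = (b - a) / 2 ^ M` is smaller than every gap between
the points `x i`. Then each cell `[a + n h, a + (n + 1) h)` contains at most one `x i`; let `g n`
be that point if there is one and `a + n h` otherwise. The map `g` is strictly increasing and
`Π_j = {g (m 2 ^ (M - j)) : m ≤ 2 ^ j}` works: nestedness and the one-point insertion only use
monotonicity of `g`, the mesh bound comes from `g n` lying in the `n`-th cell, and
`Π_M = {g 0, …, g (2 ^ M)}` contains every `x i`.
-/

open Finset Filter Topology

section DyadicLevel

variable {α : Type*} [LinearOrder α] {g : ℕ → α} {M j : ℕ} {u v w : α}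

def dyadicLevel (g : ℕ → α) (M j : ℕ) : Finset α :=
  (range (2 ^ j + 1)).image fun m ↦ g (m * 2 ^ (M - j))

theorem mem_dyadicLevel : w ∈ dyadicLevel g M j ↔ ∃ m ≤ 2 ^ j, g (m * 2 ^ (M - j)) = w := by
  simp [dyadicLevel]

theorem dyadicLevel_zero : dyadicLevel g M 0 = {g 0, g (2 ^ M)} := by
  simp [dyadicLevel, range_add_one, pair_comm]

theorem mul_two_pow_sub_eq (hj : j < M) (k : ℕ) :
    k * 2 ^ (M - j) = 2 * k * 2 ^ (M - (j + 1)) := by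
  rw [mul_comm 2 k, mul_assoc, ← pow_succ']
  congr 2
  omega

theorem StrictMono.apply_mul_lt_apply_mul_iff (hg : StrictMono g) {d m m' : ℕ} (hd : 0 < d) :
    g (m * d) < g (m' * d) ↔ m < m' :=
  hg.lt_iff_lt.trans (Nat.mul_lt_mul_right hd)

theorem StrictMono.card_dyadicLevel (hg : StrictMono g) :
    (dyadicLevel g M j).card = 2 ^ j + 1 := by
  rw [dyadicLevel, card_image_of_injective, card_range]
  exact hg.injective.comp fun m m' h ↦ Nat.eq_of_mul_eq_mul_right (by positivity) h

theorem apply_zero_mem_dyadicLevel : g 0 ∈ dyadicLevel g M j :=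
  mem_dyadicLevel.2 ⟨0, Nat.zero_le _, by rw [zero_mul]⟩

theorem apply_two_pow_mem_dyadicLevel (hj : j ≤ M) : g (2 ^ M) ∈ dyadicLevel g M j :=
  mem_dyadicLevel.2 ⟨2 ^ j, le_rfl, by rw [← pow_add, Nat.add_sub_cancel' hj]⟩

theorem apply_mem_dyadicLevel_self {n : ℕ} (hn : n ≤ 2 ^ M) : g n ∈ dyadicLevel g M M :=
  mem_dyadicLevel.2 ⟨n, hn, by rw [Nat.sub_self, pow_zero, mul_one]⟩

theorem Monotone.coe_dyadicLevel_subset_Icc (hg : Monotone g) (hj : j ≤ M) :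
    ↑(dyadicLevel g M j) ⊆ Set.Icc (g 0) (g (2 ^ M)) := by
  intro w hw
  obtain ⟨m, hm, rfl⟩ := mem_dyadicLevel.1 hw
  refine ⟨hg (Nat.zero_le _), hg ?_⟩
  calc m * 2 ^ (M - j) ≤ 2 ^ j * 2 ^ (M - j) := Nat.mul_le_mul_right _ hm
    _ = 2 ^ M := by rw [← pow_add, Nat.add_sub_cancel' hj]

theorem dyadicLevel_subset_succ (hj : j < M) :
    dyadicLevel g M j ⊆ dyadicLevel g M (j + 1) := by
  intro w hw
  obtain ⟨m, hm, rfl⟩ := mem_dyadicLevel.1 hw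
  exact mem_dyadicLevel.2 ⟨2 * m, by rw [pow_succ]; omega, by rw [mul_two_pow_sub_eq hj]⟩

theorem StrictMono.exists_eq_of_consecutive_mem_dyadicLevel (hg : StrictMono g)
    (hu : u ∈ dyadicLevel g M j) (hv : v ∈ dyadicLevel g M j) (huv : u < v)
    (hgap : ∀ w ∈ dyadicLevel g M j, w ∉ Set.Ioo u v) :
    ∃ m < 2 ^ j, u = g (m * 2 ^ (M - j)) ∧ v = g ((m + 1) * 2 ^ (M - j)) := by
  obtain ⟨m, -, rfl⟩ := mem_dyadicLevel.1 hu
  obtain ⟨m', hm', rfl⟩ := mem_dyadicLevel.1 hv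
  have hd : 0 < 2 ^ (M - j) := by positivity
  have hlt : m < m' := (hg.apply_mul_lt_apply_mul_iff hd).1 huv
  obtain rfl : m' = m + 1 := by
    by_contra hne
    exact hgap _ (mem_dyadicLevel.2 ⟨m + 1, by omega, rfl⟩)
      ⟨(hg.apply_mul_lt_apply_mul_iff hd).2 (by omega),
        (hg.apply_mul_lt_apply_mul_iff hd).2 (by omega)⟩
  exact ⟨m, by omega, rfl, rfl⟩

theorem StrictMono.existsUnique_mem_dyadicLevel_succ (hg : StrictMono g) (hj : j < M)
    (hu : u ∈ dyadicLevel g M j) (hv : v ∈ dyadicLevel g M j) (huv : u < v)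
    (hgap : ∀ w ∈ dyadicLevel g M j, w ∉ Set.Ioo u v) :
    ∃! w, w ∈ dyadicLevel g M (j + 1) ∧ w ∈ Set.Ioo u v := by
  obtain ⟨m, hm, rfl, rfl⟩ := hg.exists_eq_of_consecutive_mem_dyadicLevel hu hv huv hgap
  have hd : 0 < 2 ^ (M - (j + 1)) := by positivity
  have hlt {k l : ℕ} : g (k * 2 ^ (M - (j + 1))) < g (l * 2 ^ (M - (j + 1))) ↔ k < l :=
    hg.apply_mul_lt_apply_mul_iff hd
  rw [mul_two_pow_sub_eq hj, mul_two_pow_sub_eq hj]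
  refine ⟨g ((2 * m + 1) * 2 ^ (M - (j + 1))),
    ⟨mem_dyadicLevel.2 ⟨2 * m + 1, by rw [pow_succ]; omega, rfl⟩,
      hlt.2 (by omega), hlt.2 (by omega)⟩, ?_⟩
  rintro _ ⟨hw, hlo, hhi⟩
  obtain ⟨m', -, rfl⟩ := mem_dyadicLevel.1 hw
  rw [hlt] at hlo hhi
  obtain rfl : m' = 2 * m + 1 := by omega
  rfl

end DyadicLevel

theorem Set.Finite.exists_pos_forall_le_sub {s : Set ℝ} (hs : s.Finite) :
    ∃ δ > 0, ∀ y ∈ s, ∀ z ∈ s, y < z → δ ≤ z - y := by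
  have hsmall : ∀ᶠ δ in 𝓝[>] (0 : ℝ), ∀ y ∈ s, ∀ z ∈ s, y < z → δ ≤ z - y := by
    refine hs.eventually_all.2 fun y _ ↦ hs.eventually_all.2 fun z _ ↦ ?_
    by_cases hyz : y < z
    · exact ((eventually_lt_nhds (sub_pos.2 hyz)).filter_mono nhdsWithin_le_nhds).mono
        fun δ hδ _ ↦ hδ.le
    · exact Eventually.of_forall fun _ h ↦ absurd h hyz
  obtain ⟨δ, hδs, hδ⟩ := (hsmall.and self_mem_nhdsWithin).exists
  exact ⟨δ, hδ, hδs⟩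

section GridCells

variable {a h : ℝ} {g : ℕ → ℝ}

theorem exists_nat_mem_Ico_add_mul {y : ℝ} (hh : 0 < h) (hy : a ≤ y) :
    ∃ n : ℕ, y ∈ Set.Ico (a + n * h) (a + (n + 1) * h) := by
  have hq : 0 ≤ (y - a) / h := div_nonneg (sub_nonneg.2 hy) hh.le
  refine ⟨⌊(y - a) / h⌋₊, ?_, ?_⟩
  · have := (le_div_iff₀ hh).1 (Nat.floor_le hq)
    linarith
  · have := (div_lt_iff₀ hh).1 (Nat.lt_floor_add_one ((y - a) / h))
    linarith

theorem pos_of_forall_mem_Ico_add_mul (hg : ∀ n : ℕ, g n ∈ Set.Ico (a + n * h) (a + (n + 1) * h)) :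
    0 < h := by
  obtain ⟨h₁, h₂⟩ := hg 0
  push_cast at h₁ h₂
  linarith

theorem strictMono_of_forall_mem_Ico_add_mul
    (hg : ∀ n : ℕ, g n ∈ Set.Ico (a + n * h) (a + (n + 1) * h)) : StrictMono g := by
  intro m n hmn
  have hh := pos_of_forall_mem_Ico_add_mul hg
  have hmn' : (m : ℝ) + 1 ≤ n := by exact_mod_cast hmn
  calc g m < a + (m + 1) * h := (hg m).2
    _ ≤ a + n * h := by gcongr
    _ ≤ g n := (hg n).1

theorem eq_of_apply_eq_add_mul (hg : ∀ n : ℕ, g n ∈ Set.Ico (a + n * h) (a + (n + 1) * h))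
    {n k : ℕ} (hnk : g n = a + k * h) : n = k := by
  have hh := pos_of_forall_mem_Ico_add_mul hg
  obtain ⟨h₁, h₂⟩ := hg n
  rw [hnk] at h₁ h₂
  have hle : (n : ℝ) ≤ k := le_of_mul_le_mul_right (by linarith) hh
  have hlt : (k : ℝ) < n + 1 := lt_of_mul_lt_mul_right (by linarith) hh.le
  have : n ≤ k := by exact_mod_cast hle
  have : k < n + 1 := by exact_mod_cast hlt
  omega

/-- Every cell of length `h` contains at most one point of an `h`-separated set. -/
theorem exists_forall_mem_Ico_add_mul_and_subset_range (hh : 0 < h) {s : Set ℝ}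
    (hsa : ∀ y ∈ s, a ≤ y) (hsep : ∀ y ∈ s, ∀ z ∈ s, y < z → h ≤ z - y) :
    ∃ g : ℕ → ℝ, (∀ n : ℕ, g n ∈ Set.Ico (a + n * h) (a + (n + 1) * h)) ∧ s ⊆ Set.range g := by
  classical
  set cell : ℕ → Set ℝ := fun n ↦ Set.Ico (a + n * h) (a + (n + 1) * h)
  have hsub : ∀ n, (s ∩ cell n).Subsingleton := by
    rintro n y ⟨hy, hyl, hyr⟩ z ⟨hz, hzl, hzr⟩
    by_contra hne
    rcases lt_or_gt_of_ne hne with hlt | hlt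
    · linarith [hsep y hy z hz hlt]
    · linarith [hsep z hz y hy hlt]
  refine ⟨fun n ↦ if hn : (s ∩ cell n).Nonempty then hn.some else a + n * h,
    fun n ↦ ?_, fun y hy ↦ ?_⟩
  · dsimp only
    split_ifs with hn
    · exact hn.some_mem.2
    · exact ⟨le_rfl, by linarith⟩
  · obtain ⟨n, hn⟩ := exists_nat_mem_Ico_add_mul hh (hsa y hy)
    have hne : (s ∩ cell n).Nonempty := ⟨y, hy, hn⟩
    exact ⟨n, by simp only [dif_pos hne]; exact hsub n hne.some_mem ⟨hy, hn⟩⟩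

end GridCells

theorem sub_lt_four_div_two_pow {a b : ℝ} (hab : a < b) (hba : b - a ≤ 1) {g : ℕ → ℝ} {M j : ℕ}
    (hg : ∀ n : ℕ, g n ∈ Set.Ico (a + n * ((b - a) / 2 ^ M)) (a + (n + 1) * ((b - a) / 2 ^ M)))
    (hj : j ≤ M) (m : ℕ) :
    g ((m + 1) * 2 ^ (M - j)) - g (m * 2 ^ (M - j)) < 4 / 2 ^ j := by
  have hh : 0 < (b - a) / 2 ^ M := div_pos (sub_pos.2 hab) (by positivity)
  have hstep : (2 : ℝ) ^ (M - j) * ((b - a) / 2 ^ M) = (b - a) / 2 ^ j := by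
    rw [← Nat.sub_add_cancel hj, pow_add, Nat.add_sub_cancel]
    field_simp
  have hone : (1 : ℝ) ≤ 2 ^ (M - j) := one_le_pow₀ one_le_two
  have h₁ := (hg (m * 2 ^ (M - j))).1
  have h₂ := (hg ((m + 1) * 2 ^ (M - j))).2
  push_cast at h₁ h₂
  calc _ < (2 ^ (M - j) + 1) * ((b - a) / 2 ^ M) := by linarith
    _ ≤ 2 * ((b - a) / 2 ^ j) := by rw [← hstep]; nlinarith
    _ < 4 / 2 ^ j := by
      rw [← mul_div_assoc, div_lt_div_iff_of_pos_right (by positivity)]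
      linarith

/-- construction of a nested dyadically-refining sequence of
partitions `Π_0 ⊆ Π_1 ⊆ … ⊆ Π_M` of `[a,b]` (with `b - a ≤ 1` after rescaling),
with `#Π_j = 2^j + 1`, consecutive points at distance `< 4·2^{-j}`, one point
inserted in each subinterval at each step, and `Π_M` refining a given finite
set of points `{x_0, …, x_N}`. -/
theorem exists_nested_dyadic_refinement
    (a b : ℝ) (hab : a < b) (hba : b - a ≤ 1) (N : ℕ)
    (x : Fin (N + 1) → ℝ) (hx : StrictMono x) (hx0 : x 0 = a)
    (hxN : x (Fin.last N) = b) :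
    ∃ (M : ℕ) (P : ℕ → Finset ℝ),
      P 0 = {a, b} ∧
      (∀ j ≤ M, (P j).card = 2 ^ j + 1) ∧
      (∀ j ≤ M, ↑(P j) ⊆ Set.Icc a b ∧ a ∈ P j ∧ b ∈ P j) ∧
      (∀ j < M, P j ⊆ P (j + 1)) ∧
      (∀ j < M, ∀ u ∈ P j, ∀ v ∈ P j, u < v → (∀ w ∈ P j, w ∉ Set.Ioo u v) →
        ∃! w : ℝ, w ∈ P (j + 1) ∧ w ∈ Set.Ioo u v) ∧
      (∀ j ≤ M, ∀ u ∈ P j, ∀ v ∈ P j, u < v → (∀ w ∈ P j, w ∉ Set.Ioo u v) →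
        v - u < 4 / 2 ^ j) ∧
      (∀ i : Fin (N + 1), x i ∈ P M) := by
  obtain ⟨δ, hδ, hsep⟩ := (Set.finite_range x).exists_pos_forall_le_sub
  obtain ⟨M, hM⟩ : ∃ M : ℕ, (b - a) / 2 ^ M < δ := by
    obtain ⟨M, hM⟩ := pow_unbounded_of_one_lt ((b - a) / δ) one_lt_two
    exact ⟨M, (div_lt_comm₀ hδ (by positivity)).1 hM⟩
  have hxa : ∀ y ∈ Set.range x, a ≤ y := by
    rintro _ ⟨i, rfl⟩
    exact hx0 ▸ hx.monotone (Fin.zero_le i)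
  obtain ⟨g, hcell, hxg⟩ := exists_forall_mem_Ico_add_mul_and_subset_range
    (div_pos (sub_pos.2 hab) (by positivity)) hxa
    fun y hy z hz hyz ↦ hM.le.trans (hsep y hy z hz hyz)
  have hg := strictMono_of_forall_mem_Ico_add_mul hcell
  have hg0 : g 0 = a := by
    obtain ⟨n, hn⟩ := hxg ⟨0, hx0⟩
    obtain rfl : n = 0 := eq_of_apply_eq_add_mul hcell (by simpa using hn)
    exact hn
  have hgM : g (2 ^ M) = b := by
    obtain ⟨n, hn⟩ := hxg ⟨Fin.last N, hxN⟩
    obtain rfl : n = 2 ^ M :=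
      eq_of_apply_eq_add_mul hcell (by rw [hn]; push_cast; field_simp; ring)
    exact hn
  refine ⟨M, dyadicLevel g M, by rw [dyadicLevel_zero, hg0, hgM], fun j _ ↦ hg.card_dyadicLevel,
    fun j hj ↦ ?_, fun j hj ↦ dyadicLevel_subset_succ hj,
    fun j hj u hu v hv huv hgap ↦ hg.existsUnique_mem_dyadicLevel_succ hj hu hv huv hgap,
    fun j hj u hu v hv huv hgap ↦ ?_, fun i ↦ ?_⟩
  · rw [← hg0, ← hgM]
    exact ⟨hg.monotone.coe_dyadicLevel_subset_Icc hj, apply_zero_mem_dyadicLevel,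
      apply_two_pow_mem_dyadicLevel hj⟩
  · obtain ⟨m, -, rfl, rfl⟩ := hg.exists_eq_of_consecutive_mem_dyadicLevel hu hv huv hgap
    exact sub_lt_four_div_two_pow hab hba hcell hj m
  · obtain ⟨n, hn⟩ := hxg ⟨i, rfl⟩
    rw [← hn]
    refine apply_mem_dyadicLevel_self (hg.le_iff_le.1 ?_)
    rw [hn, hgM, ← hxN]
    exact hx.monotone (Fin.le_last i)
end
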